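/- arXiv:2101.03977 — 4 statements merged into one kernel-verified Lean document; each statement's English description precedes it below -/
import Mathlib

section
/- Let γ(x) = (4π)^{-n/2} exp(-‖x‖²/4) on ℝ^n and let f be a continuous compactly supported function on ℝ^n. Then Wf(x,t)/γ(x) converges to f(x)/γ(x) uniformly in x ∈ ℝ^n as t → 0⁺, where Wf(x,t) = ∫ (4πt)^{-n/2} exp(-‖x−y‖²/(4t)) f(y) dy. -/
set_option maxHeartbeats 2000000
open MeasureTheory Filter Real

/-- The Gauss–Weierstrass (heat) kernel on ℝⁿ. -/
noncomputable def W (n : ℕ) (x : EuclideanSpace ℝ (Fin n)) (t : ℝ) : ℝ :=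
  (4 * Real.pi * t) ^ (-(n : ℝ) / 2) * Real.exp (-‖x‖ ^ 2 / (4 * t))

variable {n : ℕ}

lemma gauss_integrable {b : ℝ} (hb : 0 < b) :
    Integrable (fun v : EuclideanSpace ℝ (Fin n) => Real.exp (-b * ‖v‖ ^ 2)) := by
  have h := (GaussianFourier.integrable_cexp_neg_mul_sq_norm_add
    (V := EuclideanSpace ℝ (Fin n)) (b := (b : ℂ)) (by simpa using hb) 0 0).norm
  refine h.congr (Eventually.of_forall fun v => ?_)
  simp [Complex.norm_exp]
  left; norm_cast

lemma gauss_integral {b : ℝ} (hb : 0 < b) :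
    ∫ v : EuclideanSpace ℝ (Fin n), Real.exp (-b * ‖v‖ ^ 2) = (Real.pi / b) ^ ((n : ℝ) / 2) := by
  rw [GaussianFourier.integral_rexp_neg_mul_sq_norm hb]
  simp [finrank_euclideanSpace_fin]

lemma W_eq {t : ℝ} (z : EuclideanSpace ℝ (Fin n)) :
    W n z t = (4 * Real.pi * t) ^ (-(n : ℝ) / 2) * Real.exp (-(1/(4*t)) * ‖z‖ ^ 2) := by
  unfold W
  congr 2
  ring

lemma W_integrable {t : ℝ} (ht : 0 < t) :
    Integrable (fun z : EuclideanSpace ℝ (Fin n) => W n z t) := by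
  simp_rw [W_eq]
  exact (gauss_integrable (by positivity)).const_mul _

lemma W_pos {t : ℝ} (ht : 0 < t) (x : EuclideanSpace ℝ (Fin n)) : 0 < W n x t := by
  unfold W
  have : 0 < 4 * Real.pi * t := by positivity
  positivity

lemma W_integral {t : ℝ} (ht : 0 < t) :
    ∫ z : EuclideanSpace ℝ (Fin n), W n z t = 1 := by
  simp_rw [W_eq]
  rw [MeasureTheory.integral_const_mul, gauss_integral (by positivity)]
  have h1 : Real.pi / (1 / (4 * t)) = 4 * Real.pi * t := by
    field_simp
  rw [h1, ← Real.rpow_add (by positivity)]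
  rw [neg_div, neg_add_cancel, Real.rpow_zero]

lemma tendsto_small (a C : ℝ) (ha : 0 < a) :
    Tendsto (fun t : ℝ => C * ((4 * Real.pi * t) ^ (-(n:ℝ)/2) * Real.exp (-a/t)))
      (nhdsWithin 0 (Set.Ioi 0)) (nhds 0) := by
  have h1 : Tendsto (fun u : ℝ => u ^ ((n:ℝ)/2) * Real.exp (-a * u)) atTop (nhds 0) :=
    tendsto_rpow_mul_exp_neg_mul_atTop_nhds_zero _ a ha
  have h2 : Tendsto (fun t : ℝ => t⁻¹) (nhdsWithin (0:ℝ) (Set.Ioi 0)) atTop :=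
    tendsto_inv_nhdsGT_zero
  have h3 := ((h1.comp h2).const_mul (C * (4 * Real.pi) ^ (-(n:ℝ)/2)))
  rw [mul_zero] at h3
  refine h3.congr' ?_
  filter_upwards [self_mem_nhdsWithin] with t ht
  have ht' : (0:ℝ) < t := ht
  have e1 : (4 * Real.pi * t) ^ (-(n:ℝ)/2) = (4 * Real.pi) ^ (-(n:ℝ)/2) * t ^ (-(n:ℝ)/2) :=
    Real.mul_rpow (by positivity) ht'.le
  have e2 : t ^ (-(n:ℝ)/2) = (t⁻¹) ^ ((n:ℝ)/2) := by
    rw [Real.inv_rpow ht'.le, ← Real.rpow_neg ht'.le, neg_div]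
  simp only [Function.comp]
  rw [e1, e2, div_eq_mul_inv, neg_mul]
  ring

lemma W_cont {t : ℝ} : Continuous (fun z : EuclideanSpace ℝ (Fin n) => W n z t) := by
  unfold W
  fun_prop

lemma key {n : ℕ} (f : EuclideanSpace ℝ (Fin n) → ℝ)
    (hf : Continuous f) (hsupp : HasCompactSupport f) {ε : ℝ} (hε : 0 < ε) :
    ∀ᶠ t in nhdsWithin (0:ℝ) (Set.Ioi 0), ∀ x,
      |(∫ y, W n (x - y) t * f y) - f x| < ε * Real.exp (-‖x‖^2/4) := by
  classical
  -- bound on f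
  obtain ⟨x₀, hx₀⟩ := (hf.abs).exists_forall_ge_of_hasCompactSupport hsupp.abs
  set K : ℝ := |f x₀| with hKdef
  have hK0 : 0 ≤ K := abs_nonneg _
  have hK : ∀ x, |f x| ≤ K := hx₀
  -- support radius
  obtain ⟨R₀, hR₀⟩ := hsupp.isBounded.subset_closedBall (0 : EuclideanSpace ℝ (Fin n))
  set R : ℝ := max R₀ 1 with hRdef
  have hR1 : (1:ℝ) ≤ R := le_max_right _ _
  have hRsub : tsupport f ⊆ Metric.closedBall 0 R :=
    hR₀.trans (Metric.closedBall_subset_closedBall (le_max_left _ _))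
  have hfL : Integrable f := hf.integrable_of_hasCompactSupport hsupp
  set L : ℝ := ∫ y, |f y| with hLdef
  set M : ℝ := 2 * R + 2 with hMdef
  have hM0 : 0 < M := by linarith
  set ε₀ : ℝ := ε * Real.exp (-M^2/4) with hε₀def
  have hε₀ : 0 < ε₀ := mul_pos hε (Real.exp_pos _)
  -- uniform continuity
  have hUC := hsupp.uniformContinuous_of_continuous hf
  rw [Metric.uniformContinuous_iff] at hUC
  obtain ⟨δ, hδ, hδ'⟩ := hUC (ε₀/2) (by positivity)
  set d : ℝ := δ/2 with hddef
  have hd : 0 < d := by positivity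
  set S : ℝ := (Real.pi/(1/8:ℝ)) ^ ((n:ℝ)/2) with hSdef
  have hS : 0 < S := Real.rpow_pos_of_pos (by positivity) _
  have E1 : ∀ᶠ t : ℝ in nhdsWithin 0 (Set.Ioi 0), t ∈ Set.Ioi (0:ℝ) := self_mem_nhdsWithin
  have E2 : ∀ᶠ t : ℝ in nhdsWithin 0 (Set.Ioi 0), t < 1/8 :=
    eventually_nhdsWithin_of_eventually_nhds (eventually_lt_nhds (by norm_num))
  have E3 : ∀ᶠ t : ℝ in nhdsWithin 0 (Set.Ioi 0),
      (2*K*S) * ((4 * Real.pi * t) ^ (-(n:ℝ)/2) * Real.exp (-(d^2/8)/t)) < ε₀/2 :=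
    (tendsto_small (d^2/8) (2*K*S) (by positivity)).eventually (gt_mem_nhds (by positivity))
  have E4 : ∀ᶠ t : ℝ in nhdsWithin 0 (Set.Ioi 0),
      L * ((4 * Real.pi * t) ^ (-(n:ℝ)/2) * Real.exp (-(M^2/32)/t)) < ε :=
    (tendsto_small (M^2/32) L (by positivity)).eventually (gt_mem_nhds hε)
  filter_upwards [E1, E2, E3, E4] with t ht ht8 hE3 hE4
  have htpos : (0:ℝ) < t := ht
  set P : ℝ := (4 * Real.pi * t) ^ (-(n:ℝ)/2) with hPdef
  have hP : 0 < P := Real.rpow_pos_of_pos (by positivity) _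
  intro x
  by_cases hx : ‖x‖ ≤ M
  · -- region A
    have hsub : (∫ y, W n (x - y) t * f y) = ∫ z, W n z t * f (x - z) := by
      have h := MeasureTheory.integral_sub_left_eq_self
        (fun y => W n (x - y) t * f y) volume x
      simp only [sub_sub_cancel] at h
      exact h.symm
    have hcont1 : Continuous fun z : EuclideanSpace ℝ (Fin n) => f (x - z) :=
      hf.comp (continuous_const.sub continuous_id)
    have hcs1 : HasCompactSupport fun z : EuclideanSpace ℝ (Fin n) => f (x - z) :=
      hsupp.comp_homeomorph (Homeomorph.subLeft x)
    have hint1 : Integrable (fun z => W n z t * f (x - z)) :=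
      (W_cont.mul hcont1).integrable_of_hasCompactSupport hcs1.mul_left
    have hint2 : Integrable (fun z : EuclideanSpace ℝ (Fin n) => W n z t * f x) :=
      (W_integrable htpos).mul_const _
    have hfx : (∫ z : EuclideanSpace ℝ (Fin n), W n z t * f x) = f x := by
      rw [MeasureTheory.integral_mul_const, W_integral htpos, one_mul]
    have hdiff : (∫ z, W n z t * f (x - z)) - f x
        = ∫ z, W n z t * (f (x - z) - f x) := by
      have : (∫ z, W n z t * (f (x - z) - f x))
          = (∫ z, W n z t * f (x - z)) - ∫ z : EuclideanSpace ℝ (Fin n), W n z t * f x := by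
        simp_rw [mul_sub]
        exact MeasureTheory.integral_sub hint1 hint2
      rw [this, hfx]
    set D : EuclideanSpace ℝ (Fin n) → ℝ := fun z => W n z t * |f (x - z) - f x| with hDdef
    have hDcont : Continuous D := W_cont.mul (hcont1.sub continuous_const).abs
    have hDnonneg : ∀ z, 0 ≤ D z := fun z =>
      mul_nonneg (W_pos htpos z).le (abs_nonneg _)
    have hDle : ∀ z, D z ≤ (2*K) * W n z t := by
      intro z
      have : |f (x - z) - f x| ≤ 2*K := by
        calc |f (x - z) - f x| ≤ |f (x - z)| + |f x| := abs_sub _ _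
          _ ≤ K + K := add_le_add (hK _) (hK _)
          _ = 2*K := by ring
      calc D z ≤ W n z t * (2*K) :=
            mul_le_mul_of_nonneg_left this (W_pos htpos z).le
        _ = (2*K) * W n z t := mul_comm _ _
    have hDint : Integrable D := by
      refine Integrable.mono ((W_integrable htpos).const_mul (2*K))
        hDcont.aestronglyMeasurable (Filter.Eventually.of_forall fun z => ?_)
      rw [Real.norm_eq_abs, Real.norm_eq_abs, abs_of_nonneg (hDnonneg z),
        abs_of_nonneg (mul_nonneg (by positivity) (W_pos htpos z).le)]
      exact hDle z
    have habs : |(∫ y, W n (x - y) t * f y) - f x| ≤ ∫ z, D z := by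
      rw [hsub, hdiff]
      have h1 := MeasureTheory.norm_integral_le_integral_norm (μ := volume)
        (fun z => W n z t * (f (x - z) - f x))
      simp only [Real.norm_eq_abs] at h1
      refine h1.trans (le_of_eq ?_)
      congr 1 with z
      rw [abs_mul, abs_of_pos (W_pos htpos z)]
    set s : Set (EuclideanSpace ℝ (Fin n)) := Metric.closedBall 0 d with hsdef
    have hsplit : (∫ z, D z) = (∫ z in s, D z) + ∫ z in sᶜ, D z :=
      (MeasureTheory.integral_add_compl (measurableSet_closedBall) hDint).symm
    have hnear : (∫ z in s, D z) ≤ ε₀/2 := by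
      have hb : ∀ z ∈ s, D z ≤ W n z t * (ε₀/2) := by
        intro z hz
        have hzd : ‖z‖ ≤ d := by
          rw [hsdef, Metric.mem_closedBall, dist_zero_right] at hz
          exact hz
        have : dist (x - z) x < δ := by
          rw [dist_eq_norm]
          simp only [sub_sub_cancel_left, norm_neg]
          calc ‖z‖ ≤ d := hzd
            _ < δ := by rw [hddef]; linarith
        have := hδ' this
        rw [Real.dist_eq] at this
        exact mul_le_mul_of_nonneg_left this.le (W_pos htpos z).le
      calc (∫ z in s, D z) ≤ ∫ z in s, W n z t * (ε₀/2) :=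
            MeasureTheory.setIntegral_mono_on hDint.integrableOn
              ((W_integrable htpos).mul_const _).integrableOn
              measurableSet_closedBall hb
        _ = (∫ z in s, W n z t) * (ε₀/2) := MeasureTheory.integral_mul_const _ _
        _ ≤ (∫ z, W n z t) * (ε₀/2) := by
            refine mul_le_mul_of_nonneg_right ?_ (by positivity)
            exact MeasureTheory.setIntegral_le_integral (W_integrable htpos)
              (Filter.Eventually.of_forall fun z => (W_pos htpos z).le)
        _ = ε₀/2 := by rw [W_integral htpos, one_mul]
    have hfar : (∫ z in sᶜ, D z) ≤ (2*K*S) * (P * Real.exp (-(d^2/8)/t)) := by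
      set g : EuclideanSpace ℝ (Fin n) → ℝ :=
        fun z => (2*K) * (P * Real.exp (-(d^2/8)/t)) * Real.exp (-(1/8) * ‖z‖^2) with hgdef
      have hgint : Integrable g := (gauss_integrable (by norm_num)).const_mul _
      have hb : ∀ z ∈ sᶜ, D z ≤ g z := by
        intro z hz
        have hzd : d ≤ ‖z‖ := by
          rw [Set.mem_compl_iff, hsdef, Metric.mem_closedBall, dist_zero_right, not_le] at hz
          exact hz.le
        have hexp : Real.exp (-‖z‖^2/(4*t)) ≤
            Real.exp (-(d^2/8)/t) * Real.exp (-(1/8) * ‖z‖^2) := by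
          rw [← Real.exp_add]
          apply Real.exp_le_exp.mpr
          have hnum : 0 ≤ 2*‖z‖^2 - d^2 - t*‖z‖^2 := by
            have h1 : d^2 ≤ ‖z‖^2 := by nlinarith
            have h2 : t*‖z‖^2 ≤ ‖z‖^2 := by nlinarith [norm_nonneg z, sq_nonneg ‖z‖]
            linarith
          have heq : (-(d^2/8)/t + -(1/8) * ‖z‖^2) - (-‖z‖^2/(4*t))
              = (2*‖z‖^2 - d^2 - t*‖z‖^2)/(8*t) := by
            field_simp
            ring
          have : 0 ≤ (-(d^2/8)/t + -(1/8) * ‖z‖^2) - (-‖z‖^2/(4*t)) := by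
            rw [heq]
            positivity
          linarith
        have hW : W n z t ≤ P * Real.exp (-(d^2/8)/t) * Real.exp (-(1/8) * ‖z‖^2) := by
          unfold W
          rw [← hPdef, mul_assoc]
          exact mul_le_mul_of_nonneg_left hexp hP.le
        calc D z ≤ W n z t * (2*K) := by
              have : |f (x - z) - f x| ≤ 2*K := by
                calc |f (x - z) - f x| ≤ |f (x - z)| + |f x| := abs_sub _ _
                  _ ≤ K + K := add_le_add (hK _) (hK _)
                  _ = 2*K := by ring
              exact mul_le_mul_of_nonneg_left this (W_pos htpos z).le
          _ ≤ (P * Real.exp (-(d^2/8)/t) * Real.exp (-(1/8) * ‖z‖^2)) * (2*K) :=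
              mul_le_mul_of_nonneg_right hW (by positivity)
          _ = g z := by rw [hgdef]; ring
      calc (∫ z in sᶜ, D z) ≤ ∫ z in sᶜ, g z :=
            MeasureTheory.setIntegral_mono_on hDint.integrableOn hgint.integrableOn
              measurableSet_closedBall.compl hb
        _ ≤ ∫ z, g z := MeasureTheory.setIntegral_le_integral hgint
              (Filter.Eventually.of_forall fun z => by positivity)
        _ = (2*K) * (P * Real.exp (-(d^2/8)/t)) * S := by
            rw [hgdef]
            rw [MeasureTheory.integral_const_mul, gauss_integral (by norm_num : (0:ℝ) < 1/8)]
        _ = (2*K*S) * (P * Real.exp (-(d^2/8)/t)) := by ring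
    have : |(∫ y, W n (x - y) t * f y) - f x| < ε₀ := by
      calc |(∫ y, W n (x - y) t * f y) - f x| ≤ ∫ z, D z := habs
        _ = (∫ z in s, D z) + ∫ z in sᶜ, D z := hsplit
        _ ≤ ε₀/2 + (2*K*S) * (P * Real.exp (-(d^2/8)/t)) := add_le_add hnear hfar
        _ < ε₀/2 + ε₀/2 := by linarith [hE3]
        _ = ε₀ := by ring
    refine this.trans_le ?_
    rw [hε₀def]
    apply mul_le_mul_of_nonneg_left _ hε.le
    apply Real.exp_le_exp.mpr
    have h2 : ‖x‖^2 ≤ M^2 := by nlinarith [norm_nonneg x]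
    nlinarith [h2]
  · -- region B
    push_neg at hx
    have hfx0 : f x = 0 := by
      apply image_eq_zero_of_notMem_tsupport
      intro hmem
      have hxR : ‖x‖ ≤ R := by
        have h := hRsub hmem
        rw [Metric.mem_closedBall, dist_zero_right] at h
        exact h
      linarith
    set B : ℝ := P * Real.exp (-(M^2/32)/t - ‖x‖^2/4) with hBdef
    have hB : 0 < B := by positivity
    have hbd : ∀ y, W n (x - y) t * |f y| ≤ B * |f y| := by
      intro y
      by_cases hy : f y = 0
      · simp [hy]
      · have hymem : y ∈ tsupport f := subset_tsupport f hy
        have hyR : ‖y‖ ≤ R := by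
          have := hRsub hymem
          simpa [Metric.mem_closedBall] using this
        have hxy : ‖x‖ - R ≤ ‖x - y‖ := by
          have h := norm_sub_norm_le x y
          linarith
        have hxR : 0 ≤ ‖x‖ - R := by linarith
        have hsq : (‖x‖ - R)^2 ≤ ‖x - y‖^2 := by nlinarith [norm_nonneg (x - y)]
        have hexp : -‖x - y‖^2/(4*t) ≤ -(M^2/32)/t - ‖x‖^2/4 := by
          have h8t : 8*t*‖x‖^2 ≤ ‖x‖^2 := by nlinarith [sq_nonneg ‖x‖]
          have hnum : 0 ≤ 8*(‖x‖ - R)^2 - M^2 - 8*t*‖x‖^2 := by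
            nlinarith [sq_nonneg (‖x‖ - M), mul_nonneg (sub_nonneg.2 hx.le) (by linarith : (0:ℝ) ≤ R), sq_nonneg ‖x‖]
          have heq : (-(M^2/32)/t - ‖x‖^2/4) - (-(‖x‖ - R)^2/(4*t))
              = (8*(‖x‖ - R)^2 - M^2 - 8*t*‖x‖^2)/(32*t) := by
            field_simp
            ring
          have h0 : 0 ≤ (-(M^2/32)/t - ‖x‖^2/4) - (-(‖x‖ - R)^2/(4*t)) := by
            rw [heq]; positivity
          have h1 : -‖x - y‖^2/(4*t) ≤ -(‖x‖ - R)^2/(4*t) :=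
            (div_le_div_iff_of_pos_right (by positivity)).mpr (neg_le_neg hsq)
          linarith
        have hW : W n (x - y) t ≤ B := by
          unfold W
          rw [← hPdef, hBdef]
          exact mul_le_mul_of_nonneg_left (Real.exp_le_exp.mpr hexp) hP.le
        exact mul_le_mul_of_nonneg_right hW (abs_nonneg _)
    have hint_lhs : Integrable (fun y => W n (x - y) t * |f y|) :=
      ((W_cont.comp (continuous_const.sub continuous_id)).mul hf.abs).integrable_of_hasCompactSupport
        hsupp.abs.mul_left
    have hint_rhs : Integrable (fun y : EuclideanSpace ℝ (Fin n) => B * |f y|) :=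
      hfL.abs.const_mul B
    calc |(∫ y, W n (x - y) t * f y) - f x|
        = |∫ y, W n (x - y) t * f y| := by rw [hfx0, sub_zero]
      _ ≤ ∫ y, W n (x - y) t * |f y| := by
          have h1 := MeasureTheory.norm_integral_le_integral_norm (μ := volume)
            (fun y => W n (x - y) t * f y)
          simp only [Real.norm_eq_abs] at h1
          refine h1.trans (le_of_eq ?_)
          congr 1 with y
          rw [abs_mul, abs_of_pos (W_pos htpos (x - y))]
      _ ≤ ∫ y, B * |f y| := MeasureTheory.integral_mono hint_lhs hint_rhs hbd
      _ = B * L := by rw [MeasureTheory.integral_const_mul]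
      _ = (L * (P * Real.exp (-(M^2/32)/t))) * Real.exp (-‖x‖^2/4) := by
          rw [hBdef, show (-(M^2/32)/t - ‖x‖^2/4) = (-(M^2/32)/t) + (-‖x‖^2/4) by ring,
            Real.exp_add]
          ring
      _ < ε * Real.exp (-‖x‖^2/4) := mul_lt_mul_of_pos_right hE4 (Real.exp_pos _)


theorem stmt2 {n : ℕ} (f : EuclideanSpace ℝ (Fin n) → ℝ)
    (hf : Continuous f) (hsupp : HasCompactSupport f) :
    TendstoUniformly
      (fun (t : ℝ) (x : EuclideanSpace ℝ (Fin n)) => (∫ y, W n (x - y) t * f y) / W n x 1)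
      (fun x => f x / W n x 1) (nhdsWithin 0 (Set.Ioi 0)) := by
  rw [Metric.tendstoUniformly_iff]
  intro ε hε
  set c : ℝ := (4 * Real.pi) ^ (-(n:ℝ)/2) with hcdef
  have hc : 0 < c := Real.rpow_pos_of_pos (by positivity) _
  filter_upwards [key f hf hsupp (mul_pos hε hc)] with t ht x
  have hγ : W n x 1 = c * Real.exp (-‖x‖^2/4) := by
    unfold W; rw [mul_one, mul_one]
  have hγpos : 0 < W n x 1 := W_pos one_pos x
  rw [Real.dist_eq, div_sub_div_same, abs_div, abs_of_pos hγpos, div_lt_iff₀ hγpos]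
  calc |f x - (∫ y, W n (x - y) t * f y)|
      = |(∫ y, W n (x - y) t * f y) - f x| := abs_sub_comm _ _
    _ < ε * c * Real.exp (-‖x‖^2/4) := ht x
    _ = ε * W n x 1 := by rw [hγ]; ring
end

section
/- Let μ be a nonnegative Borel measure on ℝ^n such that the Gauss–Weierstrass integral Wμ(x,t) = ∫ (4πt)^{-n/2} exp(-‖x−ξ‖²/(4t)) dμ(ξ) is finite for all t > 0 at x = 0. Then for every x₀ ∈ ℝ^n there exist positive constants c_n and c_α (for each α > 0, independent of x₀) such that c_n · M_{HL}μ(x₀) ≤ sup_{t>0} Wμ(x₀, t²) ≤ sup{ Wμ(x,t) : ‖x−x₀‖² < α² t } ≤ c_α · M_{HL}μ(x₀). -/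
open MeasureTheory

/-- The Gauss–Weierstrass integral of a measure. -/
noncomputable def heatExt {n : ℕ} (μ : Measure (EuclideanSpace ℝ (Fin n)))
    (x : EuclideanSpace ℝ (Fin n)) (t : ℝ) : ENNReal :=
  ∫⁻ ξ, ENNReal.ofReal (W n (x - ξ) t) ∂μ

/-- The centered Hardy–Littlewood maximal function of a measure. -/
noncomputable def MHL {n : ℕ} (μ : Measure (EuclideanSpace ℝ (Fin n)))
    (x : EuclideanSpace ℝ (Fin n)) : ENNReal :=
  ⨆ (r : ℝ) (_ : 0 < r), μ (Metric.ball x r) / volume (Metric.ball x r)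

/-!
At time `t = s²` the kernel `W n (x - ·) t` has height `(4πs²)^(-n/2)` and width `s`, so on the
ball `B(x₀, s)` it is comparable to `1 / |B(x₀, s)|`; this gives the lower bound. For the upper
bound, when `‖x - x₀‖ < α s` the kernel is at most `(4πs²)^(-n/2) e^{-k²/4}` outside
`B(x₀, k (α + 1) s)`. Up to a constant it is therefore dominated by the sum over `k` of
`(k + 1)ⁿ e^{-k²/4}` times the normalised indicator of `B(x₀, (k + 1)(α + 1) s)`; each normalised
indicator integrates against `μ` to at most `M_HL μ (x₀)`, and the weights are summable.
-/

open Metric Real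

noncomputable def unitBallVol (n : ℕ) : ℝ :=
  (volume (ball (0 : EuclideanSpace ℝ (Fin n)) 1)).toReal

noncomputable def gaussianShellSum (n : ℕ) : ℝ :=
  ∑' k : ℕ, ((k : ℝ) + 1) ^ n * exp (-(k : ℝ) ^ 2 / 4)

section Constants

variable (n : ℕ)

lemma unitBallVol_pos : 0 < unitBallVol n :=
  ENNReal.toReal_pos (measure_ball_pos volume _ one_pos).ne' measure_ball_lt_top.ne

lemma summable_gaussianShell :
    Summable fun k : ℕ ↦ ((k : ℝ) + 1) ^ n * exp (-(k : ℝ) ^ 2 / 4) := by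
  have hshift : Summable fun k : ℕ ↦
      exp (1 / 4) * (((k + 1 : ℕ) : ℝ) ^ n * exp (-(1 / 4) * (k + 1 : ℕ))) :=
    ((summable_nat_add_iff 1).2 (summable_pow_mul_exp_neg_nat_mul n (by norm_num))).mul_left _
  refine hshift.of_nonneg_of_le (fun k ↦ by positivity) fun k ↦ ?_
  have hk : (k : ℝ) ≤ (k : ℝ) ^ 2 := by exact_mod_cast Nat.le_self_pow two_ne_zero k
  rw [mul_left_comm, ← exp_add]
  push_cast
  gcongr
  linarith

lemma gaussianShellSum_pos : 0 < gaussianShellSum n :=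
  (summable_gaussianShell n).tsum_pos (fun k ↦ by positivity) 0 (by simp)

end Constants

section Kernel

variable {n : ℕ}

lemma heat_normalization_mul_pow {r : ℝ} (hr : 0 < r) :
    (4 * π * r ^ 2) ^ (-(n : ℝ) / 2) * r ^ n = (4 * π) ^ (-(n : ℝ) / 2) := by
  rw [mul_rpow (by positivity) (by positivity), ← rpow_natCast r 2, ← rpow_mul hr.le, mul_assoc,
    ← rpow_natCast r n, ← rpow_add hr, show (2 : ℕ) * (-(n : ℝ) / 2) + n = 0 by push_cast; ring,
    rpow_zero, mul_one]

lemma volume_ball_eq (x : EuclideanSpace ℝ (Fin n)) {r : ℝ} (hr : 0 < r) :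
    volume (ball x r) = ENNReal.ofReal (r ^ n * unitBallVol n) := by
  rw [Measure.addHaar_ball_of_pos volume x hr, finrank_euclideanSpace_fin, unitBallVol,
    ENNReal.ofReal_mul (by positivity), ENNReal.ofReal_toReal measure_ball_lt_top.ne]

lemma W_sq_ge_of_norm_le {y : EuclideanSpace ℝ (Fin n)} {s : ℝ} (hs : 0 < s) (hy : ‖y‖ ≤ s) :
    (4 * π * s ^ 2) ^ (-(n : ℝ) / 2) * exp (-1 / 4) ≤ W n y (s ^ 2) := by
  rw [W]
  refine mul_le_mul_of_nonneg_left (exp_le_exp.2 ?_) (by positivity)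
  rw [div_le_div_iff₀ (by norm_num) (by positivity)]
  nlinarith [norm_nonneg y]

lemma W_sq_le_of_mul_le_norm {y : EuclideanSpace ℝ (Fin n)} {s c : ℝ} (hs : 0 < s) (hc : 0 ≤ c)
    (hy : c * s ≤ ‖y‖) :
    W n y (s ^ 2) ≤ (4 * π * s ^ 2) ^ (-(n : ℝ) / 2) * exp (-c ^ 2 / 4) := by
  rw [W]
  refine mul_le_mul_of_nonneg_left (exp_le_exp.2 ?_) (by positivity)
  rw [div_le_div_iff₀ (by positivity) (by norm_num)]
  nlinarith [mul_nonneg hc hs.le]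

end Kernel

section Maximal

variable {n : ℕ} (μ : Measure (EuclideanSpace ℝ (Fin n))) (x₀ : EuclideanSpace ℝ (Fin n))

lemma measure_ball_le_MHL_mul_volume {r : ℝ} (hr : 0 < r) :
    μ (ball x₀ r) ≤ MHL μ x₀ * volume (ball x₀ r) :=
  calc μ (ball x₀ r) = μ (ball x₀ r) / volume (ball x₀ r) * volume (ball x₀ r) :=
        (ENNReal.div_mul_cancel (measure_ball_pos volume x₀ hr).ne' measure_ball_lt_top.ne).symm
    _ ≤ MHL μ x₀ * volume (ball x₀ r) :=
        mul_le_mul_left (le_iSup₂ (f := fun r (_ : 0 < r) ↦ μ (ball x₀ r) / volume (ball x₀ r))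
          r hr) _

lemma lintegral_le_tsum_mul_MHL {f : EuclideanSpace ℝ (Fin n) → ENNReal} {R : ℕ → ℝ}
    (hR : ∀ k, 0 < R k) {a : ℕ → ENNReal}
    (hf : ∀ ξ, f ξ ≤ ∑' k, (ball x₀ (R k)).indicator (fun _ ↦ a k) ξ) :
    ∫⁻ ξ, f ξ ∂μ ≤ (∑' k, a k * volume (ball x₀ (R k))) * MHL μ x₀ :=
  calc ∫⁻ ξ, f ξ ∂μ ≤ ∫⁻ ξ, ∑' k, (ball x₀ (R k)).indicator (fun _ ↦ a k) ξ ∂μ := lintegral_mono hf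
    _ = ∑' k, a k * μ (ball x₀ (R k)) := by
        rw [lintegral_tsum fun k ↦ (measurable_const.indicator measurableSet_ball).aemeasurable]
        exact tsum_congr fun k ↦ lintegral_indicator_const measurableSet_ball _
    _ ≤ ∑' k, a k * (MHL μ x₀ * volume (ball x₀ (R k))) :=
        ENNReal.tsum_le_tsum fun k ↦ mul_le_mul_right (measure_ball_le_MHL_mul_volume μ x₀ (hR k)) _
    _ = (∑' k, a k * volume (ball x₀ (R k))) * MHL μ x₀ := by
        rw [← ENNReal.tsum_mul_right]
        exact tsum_congr fun k ↦ by ring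

end Maximal

section HeatBounds

variable {n : ℕ} (μ : Measure (EuclideanSpace ℝ (Fin n))) (x₀ : EuclideanSpace ℝ (Fin n))

lemma ofReal_mul_div_volume_le_heatExt {r : ℝ} (hr : 0 < r) :
    ENNReal.ofReal ((4 * π) ^ (-(n : ℝ) / 2) * exp (-1 / 4) * unitBallVol n)
      * (μ (ball x₀ r) / volume (ball x₀ r)) ≤ heatExt μ x₀ (r ^ 2) := by
  set a := (4 * π * r ^ 2) ^ (-(n : ℝ) / 2) * exp (-1 / 4)
  have hconst : ENNReal.ofReal ((4 * π) ^ (-(n : ℝ) / 2) * exp (-1 / 4) * unitBallVol n)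
      = ENNReal.ofReal a * volume (ball x₀ r) := by
    rw [volume_ball_eq x₀ hr, ← ENNReal.ofReal_mul (by positivity)]
    congr 1
    linear_combination -(exp (-1 / 4) * unitBallVol n) * heat_normalization_mul_pow (n := n) hr
  have hball : ENNReal.ofReal a * μ (ball x₀ r) ≤ heatExt μ x₀ (r ^ 2) := by
    rw [heatExt, ← lintegral_indicator_const measurableSet_ball]
    refine lintegral_mono fun ξ ↦ Set.indicator_apply_le' (fun hξ ↦ ?_) fun _ ↦ zero_le
    rw [mem_ball_iff_norm'] at hξ
    exact ENNReal.ofReal_le_ofReal (W_sq_ge_of_norm_le hr hξ.le)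
  rwa [hconst, mul_assoc, ENNReal.mul_div_cancel (measure_ball_pos volume x₀ hr).ne'
    measure_ball_lt_top.ne]

lemma ofReal_mul_MHL_le_iSup_heatExt :
    ENNReal.ofReal ((4 * π) ^ (-(n : ℝ) / 2) * exp (-1 / 4) * unitBallVol n) * MHL μ x₀
      ≤ ⨆ (t : ℝ) (_ : 0 < t), heatExt μ x₀ (t ^ 2) := by
  rw [MHL, ENNReal.mul_iSup]
  simp_rw [ENNReal.mul_iSup]
  exact iSup₂_mono fun r hr ↦ ofReal_mul_div_volume_le_heatExt μ x₀ hr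

variable {x₀}

lemma ofReal_W_sq_le_tsum_indicator {x : EuclideanSpace ℝ (Fin n)} {α s : ℝ} (hα : 0 < α)
    (hs : 0 < s) (hx : ‖x - x₀‖ < α * s) (ξ : EuclideanSpace ℝ (Fin n)) :
    ENNReal.ofReal (W n (x - ξ) (s ^ 2)) ≤ ∑' k : ℕ, (ball x₀ ((k + 1) * ((α + 1) * s))).indicator
      (fun _ ↦ ENNReal.ofReal ((4 * π * s ^ 2) ^ (-(n : ℝ) / 2) * exp (-(k : ℝ) ^ 2 / 4))) ξ := by
  have hρ : 0 < (α + 1) * s := by positivity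
  set k := ⌊‖ξ - x₀‖ / ((α + 1) * s)⌋₊
  have hk_le : k * ((α + 1) * s) ≤ ‖ξ - x₀‖ := (le_div_iff₀ hρ).1 (Nat.floor_le (by positivity))
  have hk_lt : ‖ξ - x₀‖ < (k + 1) * ((α + 1) * s) := (div_lt_iff₀ hρ).1 (Nat.lt_floor_add_one _)
  have hks : k * s ≤ ‖x - ξ‖ := by
    have htri := norm_sub_le_norm_sub_add_norm_sub ξ x x₀
    rw [norm_sub_rev ξ x] at htri
    rcases Nat.eq_zero_or_pos k with hk | hk
    · simp [hk]
    · have hk1 : (1 : ℝ) ≤ k := by exact_mod_cast hk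
      nlinarith [mul_nonneg (mul_nonneg (sub_nonneg.2 hk1) hα.le) hs.le]
  refine le_trans ?_ (ENNReal.le_tsum k)
  rw [Set.indicator_of_mem (mem_ball_iff_norm.2 hk_lt)]
  exact ENNReal.ofReal_le_ofReal (W_sq_le_of_mul_le_norm hs k.cast_nonneg hks)

lemma tsum_gaussian_mul_volume_ball {α s : ℝ} (hα : 0 < α) (hs : 0 < s) :
    ∑' k : ℕ, ENNReal.ofReal ((4 * π * s ^ 2) ^ (-(n : ℝ) / 2) * exp (-(k : ℝ) ^ 2 / 4))
        * volume (ball x₀ ((k + 1) * ((α + 1) * s)))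
      = ENNReal.ofReal ((4 * π) ^ (-(n : ℝ) / 2) * unitBallVol n * (α + 1) ^ n
          * gaussianShellSum n) := by
  have hterm : ∀ k : ℕ,
      ENNReal.ofReal ((4 * π * s ^ 2) ^ (-(n : ℝ) / 2) * exp (-(k : ℝ) ^ 2 / 4))
        * volume (ball x₀ ((k + 1) * ((α + 1) * s)))
      = ENNReal.ofReal ((4 * π) ^ (-(n : ℝ) / 2) * unitBallVol n * (α + 1) ^ n
          * (((k : ℝ) + 1) ^ n * exp (-(k : ℝ) ^ 2 / 4))) := by
    intro k
    rw [volume_ball_eq x₀ (by positivity), ← ENNReal.ofReal_mul (by positivity)]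
    congr 1
    rw [mul_pow, mul_pow]
    linear_combination (unitBallVol n * ((k : ℝ) + 1) ^ n * (α + 1) ^ n * exp (-(k : ℝ) ^ 2 / 4))
      * heat_normalization_mul_pow (n := n) hs
  have hv := unitBallVol_pos n
  rw [tsum_congr hterm, ← ENNReal.ofReal_tsum_of_nonneg (fun k ↦ by positivity)
    ((summable_gaussianShell n).mul_left _), tsum_mul_left, gaussianShellSum]

lemma heatExt_sq_le_ofReal_mul_MHL {x : EuclideanSpace ℝ (Fin n)} {α s : ℝ} (hα : 0 < α)
    (hs : 0 < s) (hx : ‖x - x₀‖ < α * s) :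
    heatExt μ x (s ^ 2) ≤ ENNReal.ofReal ((4 * π) ^ (-(n : ℝ) / 2) * unitBallVol n * (α + 1) ^ n
      * gaussianShellSum n) * MHL μ x₀ := by
  rw [← tsum_gaussian_mul_volume_ball hα hs]
  exact lintegral_le_tsum_mul_MHL μ x₀ (fun k ↦ by positivity)
    (ofReal_W_sq_le_tsum_indicator hα hs hx)

variable (x₀)

lemma iSup_heatExt_sq_le_iSup_parabolic {α : ℝ} (hα : 0 < α) :
    (⨆ (t : ℝ) (_ : 0 < t), heatExt μ x₀ (t ^ 2))
      ≤ ⨆ (x : EuclideanSpace ℝ (Fin n)) (t : ℝ) (_ : 0 < t)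
          (_ : ‖x - x₀‖ ^ 2 < α ^ 2 * t), heatExt μ x t :=
  iSup₂_le fun t ht ↦ le_iSup_of_le x₀ <| le_iSup_of_le (t ^ 2) <|
    le_iSup₂_of_le (by positivity) (by simpa using mul_pos (pow_pos hα 2) (pow_pos ht 2)) le_rfl

lemma iSup_parabolic_le_ofReal_mul_MHL {α : ℝ} (hα : 0 < α) :
    (⨆ (x : EuclideanSpace ℝ (Fin n)) (t : ℝ) (_ : 0 < t)
        (_ : ‖x - x₀‖ ^ 2 < α ^ 2 * t), heatExt μ x t)
      ≤ ENNReal.ofReal ((4 * π) ^ (-(n : ℝ) / 2) * unitBallVol n * (α + 1) ^ n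
          * gaussianShellSum n) * MHL μ x₀ := by
  refine iSup_le fun x ↦ iSup_le fun t ↦ iSup₂_le fun ht hx ↦ ?_
  have hxs : ‖x - x₀‖ < α * √t :=
    lt_of_pow_lt_pow_left₀ 2 (by positivity) (by rwa [mul_pow, sq_sqrt ht.le])
  simpa only [sq_sqrt ht.le] using heatExt_sq_le_ofReal_mul_MHL μ hα (sqrt_pos.2 ht) hxs

end HeatBounds

theorem stmt8_general {n : ℕ} (μ : Measure (EuclideanSpace ℝ (Fin n))) :
    ∃ cn : ℝ, 0 < cn ∧ ∀ α : ℝ, 0 < α → ∃ cα : ℝ, 0 < cα ∧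
      ∀ x₀ : EuclideanSpace ℝ (Fin n),
        ENNReal.ofReal cn * MHL μ x₀ ≤ (⨆ (t : ℝ) (_ : 0 < t), heatExt μ x₀ (t ^ 2)) ∧
        (⨆ (t : ℝ) (_ : 0 < t), heatExt μ x₀ (t ^ 2))
          ≤ (⨆ (x : EuclideanSpace ℝ (Fin n)) (t : ℝ) (_ : 0 < t)
              (_ : ‖x - x₀‖ ^ 2 < α ^ 2 * t), heatExt μ x t) ∧
        (⨆ (x : EuclideanSpace ℝ (Fin n)) (t : ℝ) (_ : 0 < t)
            (_ : ‖x - x₀‖ ^ 2 < α ^ 2 * t), heatExt μ x t)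
          ≤ ENNReal.ofReal cα * MHL μ x₀ := by
  have hv := unitBallVol_pos n
  have hS := gaussianShellSum_pos n
  refine ⟨_, by positivity, fun α hα ↦ ⟨_, by positivity, fun x₀ ↦
    ⟨ofReal_mul_MHL_le_iSup_heatExt μ x₀, iSup_heatExt_sq_le_iSup_parabolic μ x₀ hα,
      iSup_parabolic_le_ofReal_mul_MHL μ x₀ hα⟩⟩⟩

theorem stmt8 {n : ℕ} (μ : Measure (EuclideanSpace ℝ (Fin n)))
    (hμ : ∀ t : ℝ, 0 < t → heatExt μ 0 t < ⊤) :
    ∃ cn : ℝ, 0 < cn ∧ ∀ α : ℝ, 0 < α → ∃ cα : ℝ, 0 < cα ∧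
      ∀ x₀ : EuclideanSpace ℝ (Fin n),
        ENNReal.ofReal cn * MHL μ x₀ ≤ (⨆ (t : ℝ) (_ : 0 < t), heatExt μ x₀ (t ^ 2)) ∧
        (⨆ (t : ℝ) (_ : 0 < t), heatExt μ x₀ (t ^ 2))
          ≤ (⨆ (x : EuclideanSpace ℝ (Fin n)) (t : ℝ) (_ : 0 < t)
              (_ : ‖x - x₀‖ ^ 2 < α ^ 2 * t), heatExt μ x t) ∧
        (⨆ (x : EuclideanSpace ℝ (Fin n)) (t : ℝ) (_ : 0 < t)
            (_ : ‖x - x₀‖ ^ 2 < α ^ 2 * t), heatExt μ x t)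
          ≤ ENNReal.ofReal cα * MHL μ x₀ :=
  stmt8_general μ
end

section
/- Let μ be a locally finite Borel measure on ℝ^n and let φ : ℝ^n → (0,∞) be radial, radially decreasing. If (|μ| ∗ φ_{t₀})(x₀) < ∞ for some x₀ ∈ ℝ^n and t₀ > 0, then (|μ| ∗ φ_t)(x) < ∞ for all x ∈ ℝ^n and all 0 < t < t₀. -/
open MeasureTheory

theorem stmt9 {n : ℕ} (μ : Measure (EuclideanSpace ℝ (Fin n))) [IsLocallyFiniteMeasure μ]
    (φ : EuclideanSpace ℝ (Fin n) → ℝ)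
    (hpos : ∀ x, 0 < φ x)
    (hrad : ∀ x y, ‖x‖ = ‖y‖ → φ x = φ y)
    (hdec : ∀ x y, ‖y‖ ≤ ‖x‖ → φ x ≤ φ y)
    (x₀ : EuclideanSpace ℝ (Fin n)) (t₀ : ℝ) (ht₀ : 0 < t₀)
    (hfin : ∫⁻ ξ, ENNReal.ofReal (t₀ ^ (-(n : ℝ)) * φ (t₀⁻¹ • (x₀ - ξ))) ∂μ < ⊤) :
    ∀ (x : EuclideanSpace ℝ (Fin n)) (t : ℝ), 0 < t → t < t₀ →
      ∫⁻ ξ, ENNReal.ofReal (t ^ (-(n : ℝ)) * φ (t⁻¹ • (x - ξ))) ∂μ < ⊤ := by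
  intro x t ht htt₀
  have htn : (0:ℝ) < t ^ (-(n:ℝ)) := Real.rpow_pos_of_pos ht _
  have ht₀n : (0:ℝ) < t₀ ^ (-(n:ℝ)) := Real.rpow_pos_of_pos ht₀ _
  set R : ℝ := max ‖x‖ ((t₀ * ‖x‖ + t * ‖x₀‖) / (t₀ - t)) with hR
  set M : ENNReal := ENNReal.ofReal (t ^ (-(n:ℝ)) * φ 0) with hM
  set C : ENNReal := ENNReal.ofReal (t ^ (-(n:ℝ)) / t₀ ^ (-(n:ℝ))) with hC
  have key : ∀ ξ, ENNReal.ofReal (t ^ (-(n : ℝ)) * φ (t⁻¹ • (x - ξ)))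
      ≤ (Metric.closedBall (0:EuclideanSpace ℝ (Fin n)) R).indicator (fun _ => M) ξ
        + C * ENNReal.ofReal (t₀ ^ (-(n : ℝ)) * φ (t₀⁻¹ • (x₀ - ξ))) := by
    intro ξ
    by_cases hξ : ξ ∈ Metric.closedBall (0:EuclideanSpace ℝ (Fin n)) R
    · rw [Set.indicator_of_mem hξ]
      have h1 : φ (t⁻¹ • (x - ξ)) ≤ φ 0 := hdec _ _ (by simp)
      calc ENNReal.ofReal (t ^ (-(n : ℝ)) * φ (t⁻¹ • (x - ξ))) ≤ M := by
            apply ENNReal.ofReal_le_ofReal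
            exact mul_le_mul_of_nonneg_left h1 htn.le
        _ ≤ _ := le_self_add
    · rw [Set.indicator_of_notMem hξ, zero_add]
      have hξR : R < ‖ξ‖ := by
        simpa [Metric.mem_closedBall, dist_eq_norm] using hξ
      have hx : ‖x‖ ≤ ‖ξ‖ := le_trans (le_max_left _ _) hξR.le
      have h2 : (t₀ * ‖x‖ + t * ‖x₀‖) / (t₀ - t) ≤ ‖ξ‖ :=
        le_trans (le_max_right _ _) hξR.le
      have h3 : t₀ * ‖x‖ + t * ‖x₀‖ ≤ (t₀ - t) * ‖ξ‖ := by
        rw [div_le_iff₀ (by linarith)] at h2; linarith [h2]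
      have h4 : t * ‖x₀ - ξ‖ ≤ t₀ * ‖x - ξ‖ := by
        have e1 : ‖x₀ - ξ‖ ≤ ‖x₀‖ + ‖ξ‖ := norm_sub_le _ _
        have e2 : ‖ξ‖ - ‖x‖ ≤ ‖x - ξ‖ := by
          have h := norm_sub_norm_le ξ x
          have h' := abs_le.mp (le_refl |‖ξ‖ - ‖x‖|)
          rw [norm_sub_rev ξ x] at h
          linarith [le_abs_self (‖ξ‖ - ‖x‖), h]
        nlinarith [norm_nonneg (x₀ - ξ)]
      have h5 : ‖t₀⁻¹ • (x₀ - ξ)‖ ≤ ‖t⁻¹ • (x - ξ)‖ := by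
        rw [norm_smul, norm_smul, Real.norm_eq_abs, Real.norm_eq_abs,
          abs_of_pos (inv_pos.mpr ht₀), abs_of_pos (inv_pos.mpr ht)]
        rw [inv_mul_eq_div, inv_mul_eq_div, div_le_div_iff₀ ht₀ ht]
        linarith [h4]
      have h6 : φ (t⁻¹ • (x - ξ)) ≤ φ (t₀⁻¹ • (x₀ - ξ)) := hdec _ _ h5
      rw [hC, ← ENNReal.ofReal_mul (by positivity)]
      apply ENNReal.ofReal_le_ofReal
      have e3 : t ^ (-(n:ℝ)) / t₀ ^ (-(n:ℝ)) * (t₀ ^ (-(n:ℝ)) * φ (t₀⁻¹ • (x₀ - ξ)))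
          = t ^ (-(n:ℝ)) * φ (t₀⁻¹ • (x₀ - ξ)) := by
        field_simp
      rw [e3]
      exact mul_le_mul_of_nonneg_left h6 htn.le
  calc ∫⁻ ξ, ENNReal.ofReal (t ^ (-(n : ℝ)) * φ (t⁻¹ • (x - ξ))) ∂μ
      ≤ ∫⁻ ξ, ((Metric.closedBall (0:EuclideanSpace ℝ (Fin n)) R).indicator (fun _ => M) ξ
        + C * ENNReal.ofReal (t₀ ^ (-(n : ℝ)) * φ (t₀⁻¹ • (x₀ - ξ)))) ∂μ :=
        lintegral_mono key
    _ = (∫⁻ ξ, (Metric.closedBall (0:EuclideanSpace ℝ (Fin n)) R).indicator (fun _ => M) ξ ∂μ)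
        + ∫⁻ ξ, C * ENNReal.ofReal (t₀ ^ (-(n : ℝ)) * φ (t₀⁻¹ • (x₀ - ξ))) ∂μ :=
        lintegral_add_left (measurable_const.indicator measurableSet_closedBall) _
    _ = M * μ (Metric.closedBall 0 R)
        + C * ∫⁻ ξ, ENNReal.ofReal (t₀ ^ (-(n : ℝ)) * φ (t₀⁻¹ • (x₀ - ξ))) ∂μ := by
        rw [lintegral_indicator_const measurableSet_closedBall,
          lintegral_const_mul' _ _ ENNReal.ofReal_ne_top]
    _ < ⊤ := by
        apply ENNReal.add_lt_top.mpr
        constructor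
        · exact ENNReal.mul_lt_top ENNReal.ofReal_lt_top
            (isCompact_closedBall _ _).measure_lt_top
        · exact ENNReal.mul_lt_top ENNReal.ofReal_lt_top hfin
end

section
/- Let μ be a finite nonnegative Borel measure on ℝ^n with heat extension u(x,t) = ∫ (4πt)^{-n/2} exp(-‖x−ξ‖²/(4t)) dμ(ξ). If the strong derivative of μ at x₀ equals L (i.e., μ(x₀ + rB)/m(rB) → L as r → 0 for every open ball B), then u has parabolic limit L at x₀: for each α > 0, u(x,t) → L as (x,t) → (x₀,0) with ‖x−x₀‖² < α t. -/
open Pointwise MeasureTheory Filter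

/-!
Since `exp (-b ^ 2 / 4) = ∫ s in Ioi b, (s / 2) * exp (-s ^ 2 / 4)`, Tonelli's theorem rewrites the
heat extension as
`u(x, t) = (4π)^(-n/2) ∫₀^∞ (s / 2) exp (-s ^ 2 / 4) μ(B(x, √t s)) / √t ^ n ds`.
In the parabolic region `x = x₀ + √t y` with `‖y‖ ≤ √α`, so `B(x, √t s) = x₀ + √t B(y, s)` and the
strong derivative gives `μ(B(x, √t s)) / √t ^ n → L m(B(0, 1)) s ^ n`; the convergence is uniform
in `y` on compact sets because a ball `B(y', s)` with `y'` close to `y` is squeezed between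
`B(y, s - η)` and `B(y, s + η)`. The bound `μ(B(x₀, ρ)) ≤ K ρ ^ n` (small `ρ` from the derivative,
large `ρ` from finiteness) dominates the integrand by `K (s + √α) ^ n (s / 2) exp (-s ^ 2 / 4)`, and
the limit integrates to `L`: the same formula applied to Lebesgue measure evaluates the Gaussian
integral `(4π)^(n/2)`.
-/

open Metric Set Real Topology Module
open scoped ENNReal

noncomputable def gaussRadialWeight (s : ℝ) : ℝ := s / 2 * exp (-s ^ 2 / 4)

lemma gaussRadialWeight_nonneg {s : ℝ} (hs : 0 ≤ s) : 0 ≤ gaussRadialWeight s := by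
  unfold gaussRadialWeight; positivity

@[fun_prop]
lemma continuous_gaussRadialWeight : Continuous gaussRadialWeight := by
  unfold gaussRadialWeight; fun_prop

lemma integrable_gaussRadialWeight : Integrable gaussRadialWeight := by
  refine ((integrable_mul_exp_neg_mul_sq (b := 1 / 4) (by norm_num)).div_const 2).congr
    (Eventually.of_forall fun s => ?_)
  simp only [gaussRadialWeight]; ring_nf

lemma integrableOn_pow_mul_gaussRadialWeight (k : ℕ) :
    IntegrableOn (fun s => s ^ k * gaussRadialWeight s) (Ioi 0) := by
  have h := integrableOn_rpow_mul_exp_neg_mul_sq (b := 1 / 4) (by norm_num)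
    (s := ((k + 1 : ℕ) : ℝ)) (by linarith [(Nat.cast_nonneg (k + 1) : (0 : ℝ) ≤ _)])
  refine IntegrableOn.congr_fun (h.div_const 2) (fun s _ => ?_) measurableSet_Ioi
  simp only [rpow_natCast, gaussRadialWeight]
  ring_nf

lemma integrableOn_add_pow_mul_gaussRadialWeight (a : ℝ) (d : ℕ) :
    IntegrableOn (fun s => (s + a) ^ d * gaussRadialWeight s) (Ioi 0) := by
  simp_rw [add_pow, Finset.sum_mul]
  refine integrable_finsetSum _ fun k _ => ?_
  exact IntegrableOn.congr_fun
    ((integrableOn_pow_mul_gaussRadialWeight k).const_mul (a ^ (d - k) * (d.choose k : ℝ)))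
    (fun s _ => by ring) measurableSet_Ioi

lemma integral_Ioi_gaussRadialWeight (b : ℝ) :
    ∫ s in Ioi b, gaussRadialWeight s = exp (-b ^ 2 / 4) := by
  have hderiv : ∀ s ∈ Ici b, HasDerivAt (fun s => -exp (-s ^ 2 / 4)) (gaussRadialWeight s) s := by
    intro s _
    have h : HasDerivAt (fun s : ℝ => -s ^ 2 / 4) (-(2 * s) / 4) s := by
      simpa using (hasDerivAt_pow 2 s).neg.div_const 4
    exact h.exp.neg.congr_deriv (by simp only [gaussRadialWeight]; ring)
  have hlim : Tendsto (fun s : ℝ => -exp (-s ^ 2 / 4)) atTop (𝓝 0) := by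
    simpa using (tendsto_exp_atBot.comp (((tendsto_neg_atTop_atBot.comp
      (tendsto_pow_atTop two_ne_zero)).atBot_div_const (by norm_num : (0 : ℝ) < 4)))).neg
  rw [integral_Ioi_of_hasDerivAt_of_tendsto' hderiv integrable_gaussRadialWeight.integrableOn hlim]
  ring

lemma lintegral_Ioi_gaussRadialWeight {b : ℝ} (hb : 0 ≤ b) :
    ∫⁻ s in Ioi b, ENNReal.ofReal (gaussRadialWeight s) = ENNReal.ofReal (exp (-b ^ 2 / 4)) := by
  rw [← integral_Ioi_gaussRadialWeight, ofReal_integral_eq_lintegral_ofReal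
    integrable_gaussRadialWeight.integrableOn]
  filter_upwards [ae_restrict_mem measurableSet_Ioi] with s hs
  exact gaussRadialWeight_nonneg (hb.trans hs.le)

section LayerCake

variable {X : Type*} [PseudoMetricSpace X] [MeasurableSpace X] [OpensMeasurableSpace X]

lemma lintegral_exp_neg_dist_sq (ν : Measure X) [SFinite ν] (x : X) {a : ℝ} (ha : 0 < a) :
    ∫⁻ ξ, ENNReal.ofReal (exp (-(dist ξ x / a) ^ 2 / 4)) ∂ν
      = ∫⁻ s in Ioi 0, ENNReal.ofReal (gaussRadialWeight s) * ν (ball x (a * s)) := by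
  set f : X → ℝ → ℝ≥0∞ := fun ξ s =>
    {p : X × ℝ | dist p.1 x < a * p.2}.indicator
      (fun p => ENNReal.ofReal (gaussRadialWeight p.2)) (ξ, s)
  have hf : Measurable (Function.uncurry f) := by
    refine Measurable.indicator (by fun_prop) (measurableSet_lt ?_ (by fun_prop))
    exact (continuous_id.dist continuous_const).measurable.comp measurable_fst
  have hf_fst (ξ : X) :
      f ξ = (Ioi (dist ξ x / a)).indicator fun s => ENNReal.ofReal (gaussRadialWeight s) := by
    ext s
    simp only [f, indicator, mem_ofPred_eq, mem_Ioi, div_lt_iff₀' ha]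
  have hf_snd (s : ℝ) :
      (f · s) = (ball x (a * s)).indicator fun _ => ENNReal.ofReal (gaussRadialWeight s) := by
    ext ξ
    simp only [f, indicator, mem_ofPred_eq, mem_ball]
  calc ∫⁻ ξ, ENNReal.ofReal (exp (-(dist ξ x / a) ^ 2 / 4)) ∂ν
      = ∫⁻ ξ, (∫⁻ s in Ioi (0 : ℝ), f ξ s) ∂ν := by
        refine lintegral_congr fun ξ => ?_
        have hb : 0 ≤ dist ξ x / a := div_nonneg dist_nonneg ha.le
        rw [hf_fst, lintegral_indicator measurableSet_Ioi,
          Measure.restrict_restrict measurableSet_Ioi, Ioi_inter_Ioi, max_eq_left hb,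
          lintegral_Ioi_gaussRadialWeight hb]
    _ = ∫⁻ s in Ioi (0 : ℝ), ∫⁻ ξ, f ξ s ∂ν := lintegral_lintegral_swap hf.aemeasurable
    _ = _ := by
        refine lintegral_congr fun s => ?_
        rw [hf_snd, lintegral_indicator_const measurableSet_ball]

lemma integral_exp_neg_dist_sq (μ : Measure X) [IsFiniteMeasure μ] (x : X) {a : ℝ}
    (ha : 0 < a) :
    ∫ ξ, exp (-(dist ξ x / a) ^ 2 / 4) ∂μ
      = ∫ s in Ioi 0, gaussRadialWeight s * μ.real (ball x (a * s)) := by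
  have hball : Measurable fun s => μ (ball x (a * s)) :=
    Monotone.measurable fun s s' h =>
      measure_mono (ball_subset_ball (mul_le_mul_of_nonneg_left h ha.le))
  have hmeas : Measurable fun s => ENNReal.ofReal (gaussRadialWeight s) * μ (ball x (a * s)) :=
    (ENNReal.measurable_ofReal.comp continuous_gaussRadialWeight.measurable).mul hball
  have hexp : AEStronglyMeasurable (fun ξ => exp (-(dist ξ x / a) ^ 2 / 4)) μ :=
    Continuous.aestronglyMeasurable (by fun_prop)
  rw [integral_eq_lintegral_of_nonneg_ae (Eventually.of_forall fun _ => (exp_pos _).le) hexp,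
    lintegral_exp_neg_dist_sq μ x ha, ← integral_toReal hmeas.aemeasurable
      (Eventually.of_forall fun _ => ENNReal.mul_lt_top ENNReal.ofReal_lt_top (measure_lt_top _ _))]
  refine setIntegral_congr_fun measurableSet_Ioi fun s hs => ?_
  rw [ENNReal.toReal_mul, ENNReal.toReal_ofReal (gaussRadialWeight_nonneg (le_of_lt hs)),
    measureReal_def]

end LayerCake

lemma integral_pow_mul_gaussRadialWeight_mul_volume_ball {V : Type*} [NormedAddCommGroup V]
    [InnerProductSpace ℝ V] [FiniteDimensional ℝ V] [MeasurableSpace V] [BorelSpace V] :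
    (∫ s in Ioi 0, s ^ finrank ℝ V * gaussRadialWeight s) * volume.real (ball (0 : V) 1)
      = (4 * π) ^ (finrank ℝ V / 2 : ℝ) := by
  set d := finrank ℝ V
  have hgauss : ∫ v : V, exp (-(1 / 4) * ‖v‖ ^ 2) = (4 * π) ^ (d / 2 : ℝ) := by
    rw [GaussianFourier.integral_rexp_neg_mul_sq_norm (by norm_num)]
    congr 1; field_simp
  have key := lintegral_exp_neg_dist_sq (volume : Measure V) 0 one_pos
  have hlhs : ∫⁻ ξ : V, ENNReal.ofReal (exp (-(dist ξ 0 / 1) ^ 2 / 4))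
      = ENNReal.ofReal ((4 * π) ^ (d / 2 : ℝ)) := by
    have hint : Integrable fun v : V => exp (-(1 / 4) * ‖v‖ ^ 2) :=
      Integrable.of_integral_ne_zero (by rw [hgauss]; positivity)
    rw [← hgauss, ofReal_integral_eq_lintegral_ofReal hint
      (Eventually.of_forall fun _ => (exp_pos _).le)]
    congr with ξ
    rw [dist_zero_right, div_one]; ring_nf
  have hnonneg : 0 ≤ᵐ[volume.restrict (Ioi 0)] fun s : ℝ => s ^ d * gaussRadialWeight s := by
    filter_upwards [ae_restrict_mem measurableSet_Ioi] with s hs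
    exact mul_nonneg (pow_nonneg (le_of_lt hs) _) (gaussRadialWeight_nonneg (le_of_lt hs))
  have hrhs : ∫⁻ s in Ioi 0, ENNReal.ofReal (gaussRadialWeight s) * volume (ball (0 : V) (1 * s))
      = ENNReal.ofReal (∫ s in Ioi 0, s ^ d * gaussRadialWeight s) * volume (ball (0 : V) 1) := by
    rw [ofReal_integral_eq_lintegral_ofReal (integrableOn_pow_mul_gaussRadialWeight d) hnonneg,
      ← lintegral_mul_const' _ _ measure_ball_lt_top.ne]
    refine setLIntegral_congr_fun measurableSet_Ioi fun s hs => ?_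
    rw [one_mul, Measure.addHaar_ball_of_pos _ _ hs,
      ENNReal.ofReal_mul (pow_nonneg (le_of_lt hs) _)]
    ring
  rw [hlhs, hrhs] at key
  rw [measureReal_def, ← ENNReal.toReal_ofReal (integral_nonneg_of_ae hnonneg),
    ← ENNReal.toReal_mul, ← key, ENNReal.toReal_ofReal (by positivity)]

lemma W_eq_of_pos {n : ℕ} (v : EuclideanSpace ℝ (Fin n)) {t : ℝ} (ht : 0 < t) :
    W n v t = (4 * π) ^ (-(n : ℝ) / 2) / √t ^ n * exp (-(‖v‖ / √t) ^ 2 / 4) := by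
  rw [W, mul_rpow (by positivity) ht.le, rpow_div_two_eq_sqrt _ ht.le, rpow_neg (sqrt_nonneg t),
    rpow_natCast, div_pow, sq_sqrt ht.le]
  ring_nf

lemma integral_W_sub_eq {n : ℕ} (μ : Measure (EuclideanSpace ℝ (Fin n))) [IsFiniteMeasure μ]
    (x : EuclideanSpace ℝ (Fin n)) {t : ℝ} (ht : 0 < t) :
    ∫ ξ, W n (x - ξ) t ∂μ = (4 * π) ^ (-(n : ℝ) / 2) *
      ∫ s in Ioi 0, gaussRadialWeight s * (μ.real (ball x (√t * s)) / √t ^ n) := by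
  simp_rw [W_eq_of_pos _ ht, ← dist_eq_norm, dist_comm x, integral_const_mul,
    integral_exp_neg_dist_sq μ x (sqrt_pos.2 ht), mul_div_assoc', integral_div]
  ring

section Parabolic

variable {E : Type*} [NormedAddCommGroup E]

abbrev parabolicNhds (x₀ : E) (α : ℝ) : Filter (E × ℝ) :=
  𝓝[{p | ‖p.1 - x₀‖ ^ 2 < α * p.2}] (x₀, 0)

lemma eventually_pos_parabolicNhds (x₀ : E) {α : ℝ} (hα : 0 < α) :
    ∀ᶠ p in parabolicNhds x₀ α, 0 < p.2 :=
  eventually_mem_nhdsWithin.mono fun _ hp => pos_of_mul_pos_right ((sq_nonneg _).trans_lt hp) hα.le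

lemma eventually_norm_sub_le_parabolicNhds (x₀ : E) {α : ℝ} (hα : 0 < α) :
    ∀ᶠ p in parabolicNhds x₀ α, ‖p.1 - x₀‖ ≤ √p.2 * √α := by
  filter_upwards [eventually_mem_nhdsWithin] with p (hp : _ < _)
  rw [← sqrt_mul' _ hα.le]
  exact le_sqrt_of_sq_le (by linarith)

variable [NormedSpace ℝ E]

lemma tendsto_parabolicNhds_rescale (x₀ : E) {α : ℝ} (hα : 0 < α) :
    Tendsto (fun p : E × ℝ => (√p.2, (√p.2)⁻¹ • (p.1 - x₀))) (parabolicNhds x₀ α)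
      (𝓝[>] 0 ×ˢ 𝓟 (closedBall 0 √α)) := by
  have hpos := (eventually_pos_parabolicNhds x₀ hα).mono fun _ ht => sqrt_pos.2 ht
  refine (tendsto_nhdsWithin_iff.2 ⟨?_, hpos⟩).prodMk (tendsto_principal.2 ?_)
  · have : Continuous fun p : E × ℝ => √p.2 := by fun_prop
    simpa using (this.tendsto (x₀, 0)).mono_left nhdsWithin_le_nhds
  · filter_upwards [eventually_norm_sub_le_parabolicNhds x₀ hα, hpos] with p hp ht
    rwa [mem_closedBall_zero_iff, norm_smul, norm_inv, Real.norm_of_nonneg ht.le,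
      inv_mul_le_iff₀ ht]

end Parabolic

section Homothety

variable {E : Type*} [NormedAddCommGroup E] [NormedSpace ℝ E]

lemma image_homothety_ball (x₀ y : E) {r : ℝ} (hr : 0 < r) (s : ℝ) :
    (fun z => x₀ + r • z) '' ball y s = ball (x₀ + r • y) (r * s) := by
  have : (fun z => x₀ + r • z) = (x₀ +ᵥ ·) ∘ (r • ·) := rfl
  rw [this, Set.image_comp, Set.image_smul, _root_.smul_ball hr.ne', Real.norm_of_nonneg hr.le,
    Set.image_vadd, Metric.vadd_ball, vadd_eq_add]

lemma ball_homothety_subset (x₀ : E) {y y' : E} {r s η : ℝ} (hr : 0 ≤ r) (h : dist y' y ≤ η) :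
    ball (x₀ + r • y') (r * s) ⊆ ball (x₀ + r • y) (r * (s + η)) := by
  refine ball_subset_ball' ?_
  rw [dist_add_left, dist_smul₀, Real.norm_of_nonneg hr]
  nlinarith

end Homothety

section BallGrowth

variable {X : Type*} [PseudoMetricSpace X] [MeasurableSpace X] {μ : Measure X} [IsFiniteMeasure μ]
  {x₀ : X} {d : ℕ}

lemma exists_measureReal_ball_le_mul_pow {A : ℝ}
    (h : ∀ᶠ ρ in 𝓝[>] 0, μ.real (ball x₀ ρ) ≤ A * ρ ^ d) :
    ∃ K, ∀ ρ, 0 < ρ → μ.real (ball x₀ ρ) ≤ K * ρ ^ d := by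
  obtain ⟨δ, hδ : 0 < δ, hsmall⟩ := mem_nhdsGT_iff_exists_Ioo_subset.1 h
  refine ⟨max A (μ.real univ / δ ^ d), fun ρ hρ => ?_⟩
  rcases lt_or_ge ρ δ with hρδ | hδρ
  · exact (hsmall ⟨hρ, hρδ⟩).trans
      (mul_le_mul_of_nonneg_right (le_max_left _ _) (by positivity))
  · calc μ.real (ball x₀ ρ) ≤ μ.real univ := measureReal_mono (subset_univ _)
      _ = μ.real univ / δ ^ d * δ ^ d := (div_mul_cancel₀ _ (by positivity)).symm
      _ ≤ max A (μ.real univ / δ ^ d) * ρ ^ d := by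
        gcongr
        all_goals first | positivity | exact le_max_right _ _

lemma measureReal_ball_div_pow_le {K r s a : ℝ} {x : X}
    (hK : ∀ ρ, 0 < ρ → μ.real (ball x₀ ρ) ≤ K * ρ ^ d) (hr : 0 < r) (hs : 0 < s)
    (hx : dist x x₀ ≤ r * a) :
    μ.real (ball x (r * s)) / r ^ d ≤ K * (s + a) ^ d := by
  have hsub : ball x (r * s) ⊆ ball x₀ (r * (s + a)) := ball_subset_ball' (by linarith)
  calc μ.real (ball x (r * s)) / r ^ d ≤ K * (r * (s + a)) ^ d / r ^ d := by
        gcongr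
        exact (measureReal_mono hsub).trans (hK _ (by nlinarith [dist_nonneg (x := x) (y := x₀)]))
    _ = K * (s + a) ^ d := by rw [mul_pow]; field_simp

end BallGrowth

section Density

variable {E : Type*} [NormedAddCommGroup E] [NormedSpace ℝ E] [MeasurableSpace E]

/-- With `d = n` and Lebesgue measure `m` on `ℝⁿ`, this says that the strong derivative of `μ` at
`x₀` is `ℓ / m(B(0, 1))`. -/
def HasStrongDensity (μ : Measure E) (x₀ : E) (d : ℕ) (ℓ : ℝ) : Prop :=
  ∀ y s, 0 < s → Tendsto (fun r : ℝ => μ.real (ball (x₀ + r • y) (r * s)) / r ^ d)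
    (𝓝[>] 0) (𝓝 (ℓ * s ^ d))

variable {μ : Measure E} [IsFiniteMeasure μ] {x₀ : E} {d : ℕ} {ℓ : ℝ}

lemma HasStrongDensity.tendsto_prod_nhds (H : HasStrongDensity μ x₀ d ℓ) (y : E) {s : ℝ}
    (hs : 0 < s) :
    Tendsto (fun q : ℝ × E => μ.real (ball (x₀ + q.1 • q.2) (q.1 * s)) / q.1 ^ d)
      (𝓝[>] 0 ×ˢ 𝓝 y) (𝓝 (ℓ * s ^ d)) := by
  have hmono {r σ η : ℝ} {z z' : E} (hr : 0 < r) (h : dist z' z ≤ η) :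
      μ.real (ball (x₀ + r • z') (r * σ)) / r ^ d
        ≤ μ.real (ball (x₀ + r • z) (r * (σ + η))) / r ^ d :=
    div_le_div_of_nonneg_right (measureReal_mono (ball_homothety_subset x₀ hr.le h))
      (by positivity)
  have hr : ∀ᶠ q : ℝ × E in 𝓝[>] 0 ×ˢ 𝓝 y, 0 < q.1 := eventually_mem_nhdsWithin.prod_inl _
  refine tendsto_order.2 ⟨fun a ha => ?_, fun b hb => ?_⟩
  · have hcont : Tendsto (fun η => ℓ * (s - η) ^ d) (𝓝[>] 0) (𝓝 (ℓ * s ^ d)) :=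
      ((Continuous.tendsto (by fun_prop) 0).mono_left nhdsWithin_le_nhds).trans (by simp)
    obtain ⟨η, ⟨haη, hηs⟩, hη⟩ := ((hcont.eventually (lt_mem_nhds ha)).and
      (nhdsWithin_le_nhds (gt_mem_nhds hs)) |>.and self_mem_nhdsWithin).exists
    have hlim := (H y (s - η) (sub_pos.2 hηs)).eventually (lt_mem_nhds haη)
    filter_upwards [hr, hlim.prod_inl _, Eventually.prod_inr (ball_mem_nhds y hη) _]
      with q hq h1 h2
    refine h1.trans_le ?_
    simpa using hmono (σ := s - η) hq (mem_ball'.1 h2).le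
  · have hcont : Tendsto (fun η => ℓ * (s + η) ^ d) (𝓝[>] 0) (𝓝 (ℓ * s ^ d)) :=
      ((Continuous.tendsto (by fun_prop) 0).mono_left nhdsWithin_le_nhds).trans (by simp)
    obtain ⟨η, hbη, hη⟩ := ((hcont.eventually (gt_mem_nhds hb)).and self_mem_nhdsWithin).exists
    have hlim := (H y (s + η) (by positivity)).eventually (gt_mem_nhds hbη)
    filter_upwards [hr, hlim.prod_inl _, Eventually.prod_inr (ball_mem_nhds y hη) _]
      with q hq h1 h2
    exact (hmono hq (mem_ball.1 h2).le).trans_lt h1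

lemma HasStrongDensity.tendsto_prod_nhdsSet (H : HasStrongDensity μ x₀ d ℓ) {K : Set E}
    (hK : IsCompact K) {s : ℝ} (hs : 0 < s) :
    Tendsto (fun q : ℝ × E => μ.real (ball (x₀ + q.1 • q.2) (q.1 * s)) / q.1 ^ d)
      (𝓝[>] 0 ×ˢ 𝓝ˢ K) (𝓝 (ℓ * s ^ d)) := by
  rw [hK.prod_nhdsSet_eq_biSup]
  exact tendsto_iSup.2 fun y => tendsto_iSup.2 fun _ => H.tendsto_prod_nhds y hs

lemma HasStrongDensity.exists_measureReal_ball_le (H : HasStrongDensity μ x₀ d ℓ) :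
    ∃ K, ∀ ρ, 0 < ρ → μ.real (ball x₀ ρ) ≤ K * ρ ^ d := by
  refine exists_measureReal_ball_le_mul_pow (A := ℓ + 1) ?_
  filter_upwards [(H 0 1 one_pos).eventually (gt_mem_nhds (show ℓ * 1 ^ d < ℓ + 1 by simp)),
    eventually_mem_nhdsWithin] with ρ hρ (hρ0 : 0 < ρ)
  simpa [div_le_iff₀ (pow_pos hρ0 d)] using hρ.le

variable [FiniteDimensional ℝ E]

lemma HasStrongDensity.tendsto_parabolicNhds (H : HasStrongDensity μ x₀ d ℓ) {α s : ℝ}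
    (hα : 0 < α) (hs : 0 < s) :
    Tendsto (fun p : E × ℝ => μ.real (ball p.1 (√p.2 * s)) / √p.2 ^ d) (parabolicNhds x₀ α)
      (𝓝 (ℓ * s ^ d)) := by
  have hφ := tendsto_parabolicNhds_rescale x₀ hα
  refine ((H.tendsto_prod_nhdsSet (isCompact_closedBall 0 √α) hs).comp
    (hφ.mono_right (prod_mono le_rfl principal_le_nhdsSet))).congr' ?_
  filter_upwards [eventually_pos_parabolicNhds x₀ hα] with p hp
  simp only [Function.comp_apply, smul_inv_smul₀ (sqrt_pos.2 hp).ne', add_sub_cancel]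

lemma HasStrongDensity.tendsto_integral_parabolicNhds (H : HasStrongDensity μ x₀ d ℓ) {α : ℝ}
    (hα : 0 < α) :
    Tendsto (fun p : E × ℝ =>
        ∫ s in Ioi 0, gaussRadialWeight s * (μ.real (ball p.1 (√p.2 * s)) / √p.2 ^ d))
      (parabolicNhds x₀ α) (𝓝 (ℓ * ∫ s in Ioi 0, s ^ d * gaussRadialWeight s)) := by
  obtain ⟨K, hK⟩ := H.exists_measureReal_ball_le
  set F : E × ℝ → ℝ → ℝ := fun p s =>
    gaussRadialWeight s * (μ.real (ball p.1 (√p.2 * s)) / √p.2 ^ d)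
  have hmeas (p : E × ℝ) : AEStronglyMeasurable (F p) (volume.restrict (Ioi 0)) := by
    have hmono : Monotone fun s => μ.real (ball p.1 (√p.2 * s)) := fun s s' h =>
      measureReal_mono (ball_subset_ball (mul_le_mul_of_nonneg_left h (sqrt_nonneg _)))
    exact (continuous_gaussRadialWeight.measurable.mul
      (hmono.measurable.div_const _)).aestronglyMeasurable
  have hdom : ∀ᶠ p in parabolicNhds x₀ α, ∀ᵐ s ∂volume.restrict (Ioi 0),
      ‖F p s‖ ≤ gaussRadialWeight s * (K * (s + √α) ^ d) := by
    filter_upwards [eventually_pos_parabolicNhds x₀ hα, eventually_norm_sub_le_parabolicNhds x₀ hα]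
      with p ht hp
    filter_upwards [ae_restrict_mem measurableSet_Ioi] with s (hs : 0 < s)
    rw [Real.norm_of_nonneg (mul_nonneg (gaussRadialWeight_nonneg hs.le) (by positivity))]
    exact mul_le_mul_of_nonneg_left
      (measureReal_ball_div_pow_le hK (sqrt_pos.2 ht) hs (by rwa [dist_eq_norm]))
      (gaussRadialWeight_nonneg hs.le)
  have hint : IntegrableOn (fun s => gaussRadialWeight s * (K * (s + √α) ^ d)) (Ioi 0) :=
    IntegrableOn.congr_fun ((integrableOn_add_pow_mul_gaussRadialWeight √α d).const_mul K)
      (fun s _ => by ring) measurableSet_Ioi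
  have hlim : ∀ᵐ s ∂volume.restrict (Ioi 0),
      Tendsto (F · s) (parabolicNhds x₀ α) (𝓝 (gaussRadialWeight s * (ℓ * s ^ d))) := by
    filter_upwards [ae_restrict_mem measurableSet_Ioi] with s (hs : 0 < s)
    exact (H.tendsto_parabolicNhds hα hs).const_mul _
  convert tendsto_integral_filter_of_dominated_convergence _ (.of_forall hmeas) hdom hint hlim
    using 2
  rw [← integral_const_mul]
  congr with s
  ring

end Density

lemma hasStrongDensity_of_tendsto_div_volume {E : Type*} [NormedAddCommGroup E]
    [NormedSpace ℝ E] [FiniteDimensional ℝ E] [MeasureSpace E] [BorelSpace E]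
    [(volume : Measure E).IsAddHaarMeasure] {μ : Measure E} {x₀ : E} {L : ℝ}
    (hder : ∀ (y : E) (s : ℝ), 0 < s →
      Tendsto (fun r : ℝ => (μ ((fun z => x₀ + r • z) '' ball y s)).toReal
        / (volume (r • ball y s)).toReal) (𝓝[>] 0) (𝓝 L)) :
    HasStrongDensity μ x₀ (finrank ℝ E) (L * volume.real (ball (0 : E) 1)) := by
  intro y s hs
  have hc : 0 < volume.real (ball (0 : E) 1) :=
    ENNReal.toReal_pos (measure_ball_pos _ _ one_pos).ne' measure_ball_lt_top.ne
  have h := (hder y s hs).mul_const (volume.real (ball (0 : E) 1) * s ^ finrank ℝ E)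
  rw [← mul_assoc] at h
  refine h.congr' ?_
  filter_upwards [eventually_mem_nhdsWithin] with r (hr : 0 < r)
  rw [image_homothety_ball x₀ y hr, Measure.addHaar_smul_of_nonneg _ hr.le,
    Measure.addHaar_ball_of_pos _ _ hs, ← measureReal_def, ENNReal.toReal_mul, ENNReal.toReal_mul,
    ENNReal.toReal_ofReal (by positivity), ENNReal.toReal_ofReal (by positivity), ← measureReal_def]
  field_simp

theorem stmt17_general {n : ℕ} (μ : Measure (EuclideanSpace ℝ (Fin n))) [IsFiniteMeasure μ]
    (x₀ : EuclideanSpace ℝ (Fin n)) (L : ℝ)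
    (hder : ∀ (y : EuclideanSpace ℝ (Fin n)) (s : ℝ), 0 < s →
      Tendsto (fun r : ℝ =>
          (μ ((fun z => x₀ + r • z) '' Metric.ball y s)).toReal
            / (volume ((r : ℝ) • Metric.ball y s)).toReal)
        (nhdsWithin 0 (Set.Ioi 0)) (nhds L)) :
    ∀ α : ℝ, 0 < α →
      Tendsto (fun p : EuclideanSpace ℝ (Fin n) × ℝ => ∫ ξ, W n (p.1 - ξ) p.2 ∂μ)
        (nhdsWithin (x₀, 0) {p | ‖p.1 - x₀‖ ^ 2 < α * p.2}) (nhds L) := by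
  intro α hα
  have H := hasStrongDensity_of_tendsto_div_volume hder
  have hconst := integral_pow_mul_gaussRadialWeight_mul_volume_ball (V := EuclideanSpace ℝ (Fin n))
  rw [finrank_euclideanSpace_fin] at H hconst
  have hL : (4 * π) ^ (-(n : ℝ) / 2) * (L * volume.real (ball (0 : EuclideanSpace ℝ (Fin n)) 1) *
      ∫ s in Ioi 0, s ^ n * gaussRadialWeight s) = L := by
    rw [mul_assoc L, mul_comm (volume.real _), hconst, mul_left_comm, ← rpow_add (by positivity),
      neg_div, neg_add_cancel, rpow_zero, mul_one]
  rw [← hL]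
  refine ((H.tendsto_integral_parabolicNhds hα).const_mul _).congr' ?_
  filter_upwards [eventually_pos_parabolicNhds x₀ hα] with p hp
  exact (integral_W_sub_eq μ p.1 hp).symm

theorem stmt17 {n : ℕ} (μ : Measure (EuclideanSpace ℝ (Fin n))) [IsFiniteMeasure μ]
    (x₀ : EuclideanSpace ℝ (Fin n)) (L : ℝ) (hL : 0 ≤ L)
    (hder : ∀ (y : EuclideanSpace ℝ (Fin n)) (s : ℝ), 0 < s →
      Tendsto (fun r : ℝ =>
          (μ ((fun z => x₀ + r • z) '' Metric.ball y s)).toReal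
            / (volume ((r : ℝ) • Metric.ball y s)).toReal)
        (nhdsWithin 0 (Set.Ioi 0)) (nhds L)) :
    ∀ α : ℝ, 0 < α →
      Tendsto (fun p : EuclideanSpace ℝ (Fin n) × ℝ => ∫ ξ, W n (p.1 - ξ) p.2 ∂μ)
        (nhdsWithin (x₀, 0) {p | ‖p.1 - x₀‖ ^ 2 < α * p.2}) (nhds L) :=
  stmt17_general μ x₀ L hder
end
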